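/- Let x* ∈ ℝ^N be nonzero and let x ∈ ℝ^N satisfy ‖x‖₂ ≤ (1/2)‖x*‖₂. Then, with v = x*/‖x*‖₂, the phase-retrieval population Hessian satisfies vᵀ∇²g(x)v = 12⟨x,v⟩² − 4‖x*‖₂² + 6‖x‖₂² − 2‖x*‖₂² ≤ −(3/2)‖x*‖₂²; in particular λ_min(∇²g(x)) ≤ −(3/2)‖x*‖₂². In particular x = 0 is a strict saddle point with λ_min(∇²g(0)) = −6‖x*‖₂². -/

import Mathlib

open scoped RealInnerProductSpace

/-- The gradient of the phase-retrieval population risk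
`g(x) = ‖xxᵀ − x*x*ᵀ‖_F² + (1/2)(‖x‖² − ‖x*‖²)²`, namely
`∇g(x) = 6‖x‖²x − 2‖x*‖²x − 4(x*ᵀx)x*`. -/
noncomputable def gradPR {N : ℕ} (xs x : EuclideanSpace ℝ (Fin N)) :
    EuclideanSpace ℝ (Fin N) :=
  (6 * ‖x‖ ^ 2 - 2 * ‖xs‖ ^ 2) • x - (4 * ⟪xs, x⟫) • xs

/-- The smallest eigenvalue of the Hessian
`∇²g(x) = 12xxᵀ − 4x*x*ᵀ + (6‖x‖² − 2‖x*‖²)I` of the phase-retrieval population risk,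
given as the infimum of the Rayleigh quotient over the unit sphere. -/
noncomputable def lamMinHess {N : ℕ} (xs x : EuclideanSpace ℝ (Fin N)) : ℝ :=
  sInf {t : ℝ | ∃ v : EuclideanSpace ℝ (Fin N), ‖v‖ = 1 ∧
    t = 12 * ⟪x, v⟫ ^ 2 - 4 * ⟪xs, v⟫ ^ 2 + 6 * ‖x‖ ^ 2 - 2 * ‖xs‖ ^ 2}

/-! In the direction `v = x*/‖x*‖` the term `-4⟨x*,v⟩² - 2‖x*‖² = -6‖x*‖²` dominates, since by
Cauchy–Schwarz the remaining terms are at most `18‖x‖² ≤ (9/2)‖x*‖²`. At `x = 0` the same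
Cauchy–Schwarz bound shows that this direction is also the minimizing one. -/

theorem real_inner_sq_le_norm_sq {F : Type*} [SeminormedAddCommGroup F] [InnerProductSpace ℝ F]
    (a : F) {v : F} (hv : ‖v‖ = 1) : ⟪a, v⟫ ^ 2 ≤ ‖a‖ ^ 2 := by
  simpa [hv] using pow_le_pow_left₀ (abs_nonneg _) (abs_real_inner_le_norm a v) 2

theorem real_inner_inv_norm_smul_self {F : Type*} [SeminormedAddCommGroup F]
    [InnerProductSpace ℝ F] {a : F} (ha : ‖a‖ ≠ 0) : ⟪a, ‖a‖⁻¹ • a⟫ = ‖a‖ := by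
  rw [real_inner_smul_right, real_inner_self_eq_norm_sq]
  field_simp

section PhaseRetrieval

variable {N : ℕ} (xs x : EuclideanSpace ℝ (Fin N))

/-- `vᵀ∇²g(x)v`. -/
noncomputable def hessRayleigh (v : EuclideanSpace ℝ (Fin N)) : ℝ :=
  12 * ⟪x, v⟫ ^ 2 - 4 * ⟪xs, v⟫ ^ 2 + 6 * ‖x‖ ^ 2 - 2 * ‖xs‖ ^ 2

theorem le_hessRayleigh {v : EuclideanSpace ℝ (Fin N)} (hv : ‖v‖ = 1) :
    6 * ‖x‖ ^ 2 - 6 * ‖xs‖ ^ 2 ≤ hessRayleigh xs x v := by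
  have := real_inner_sq_le_norm_sq xs hv
  unfold hessRayleigh
  nlinarith [sq_nonneg ⟪x, v⟫]

theorem lamMinHess_le_hessRayleigh {v : EuclideanSpace ℝ (Fin N)} (hv : ‖v‖ = 1) :
    lamMinHess xs x ≤ hessRayleigh xs x v := by
  refine csInf_le ⟨6 * ‖x‖ ^ 2 - 6 * ‖xs‖ ^ 2, ?_⟩ ⟨v, hv, rfl⟩
  rintro t ⟨w, hw, rfl⟩
  exact le_hessRayleigh xs x hw

theorem le_lamMinHess {c : ℝ} (hne : ∃ v : EuclideanSpace ℝ (Fin N), ‖v‖ = 1)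
    (hc : ∀ v : EuclideanSpace ℝ (Fin N), ‖v‖ = 1 → c ≤ hessRayleigh xs x v) :
    c ≤ lamMinHess xs x := by
  obtain ⟨v, hv⟩ := hne
  refine le_csInf ⟨_, v, hv, rfl⟩ ?_
  rintro t ⟨w, hw, rfl⟩
  exact hc w hw

theorem hessRayleigh_of_inner_eq_norm {v : EuclideanSpace ℝ (Fin N)} (hv : ⟪xs, v⟫ = ‖xs‖) :
    hessRayleigh xs x v = 12 * ⟪x, v⟫ ^ 2 - 4 * ‖xs‖ ^ 2 + 6 * ‖x‖ ^ 2 - 2 * ‖xs‖ ^ 2 := by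
  rw [hessRayleigh, hv]

variable {xs x}

theorem curvature_le_of_norm_le_half (hx : ‖x‖ ≤ (1 / 2) * ‖xs‖)
    {v : EuclideanSpace ℝ (Fin N)} (hv : ‖v‖ = 1) :
    12 * ⟪x, v⟫ ^ 2 - 4 * ‖xs‖ ^ 2 + 6 * ‖x‖ ^ 2 - 2 * ‖xs‖ ^ 2 ≤ -(3 / 2) * ‖xs‖ ^ 2 := by
  have hxv := real_inner_sq_le_norm_sq x hv
  have hxx : ‖x‖ ^ 2 ≤ (1 / 4) * ‖xs‖ ^ 2 := by nlinarith [norm_nonneg x]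
  nlinarith

theorem lamMinHess_zero (hxs : xs ≠ 0) :
    lamMinHess xs (0 : EuclideanSpace ℝ (Fin N)) = -6 * ‖xs‖ ^ 2 := by
  have hu : ‖‖xs‖⁻¹ • xs‖ = 1 := norm_smul_inv_norm hxs
  have hxsu := real_inner_inv_norm_smul_self (norm_ne_zero_iff.mpr hxs)
  refine le_antisymm ?_ (le_lamMinHess _ _ ⟨_, hu⟩ fun v hv => ?_)
  · calc lamMinHess xs 0 ≤ hessRayleigh xs 0 (‖xs‖⁻¹ • xs) := lamMinHess_le_hessRayleigh _ _ hu
      _ = -6 * ‖xs‖ ^ 2 := by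
        rw [hessRayleigh_of_inner_eq_norm _ _ hxsu, inner_zero_left, norm_zero]
        ring
  · simpa using le_hessRayleigh xs 0 hv

end PhaseRetrieval

theorem stmt_15 {N : ℕ} (xs x : EuclideanSpace ℝ (Fin N)) (hxs : xs ≠ 0)
    (hx : ‖x‖ ≤ (1 / 2) * ‖xs‖) :
    12 * ⟪x, ‖xs‖⁻¹ • xs⟫ ^ 2 - 4 * ‖xs‖ ^ 2 + 6 * ‖x‖ ^ 2 - 2 * ‖xs‖ ^ 2 ≤
      -(3 / 2) * ‖xs‖ ^ 2 ∧
    lamMinHess xs x ≤ -(3 / 2) * ‖xs‖ ^ 2 ∧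
    gradPR xs (0 : EuclideanSpace ℝ (Fin N)) = 0 ∧
    lamMinHess xs (0 : EuclideanSpace ℝ (Fin N)) = -6 * ‖xs‖ ^ 2 := by
  set v := ‖xs‖⁻¹ • xs
  have hv : ‖v‖ = 1 := norm_smul_inv_norm hxs
  have hxsv : ⟪xs, v⟫ = ‖xs‖ := real_inner_inv_norm_smul_self (norm_ne_zero_iff.mpr hxs)
  refine ⟨curvature_le_of_norm_le_half hx hv, ?_, by simp [gradPR], lamMinHess_zero hxs⟩
  calc lamMinHess xs x ≤ hessRayleigh xs x v := lamMinHess_le_hessRayleigh xs x hv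
    _ ≤ -(3 / 2) * ‖xs‖ ^ 2 := by
      rw [hessRayleigh_of_inner_eq_norm xs x hxsv]
      exact curvature_le_of_norm_le_half hx hv
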